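/- Suppose neither T_L nor T_R contains a pair, i.e., every pair {p_i, q_i} has exactly one member in V_L and one in V_R. Then the coloring assigning blue to all vertices of V_L and red to all vertices of V_R is a feasible coloring, T_L and T_R are minimum spanning trees of V_L and V_R respectively, and the feasible 2-MST solution (T_L, T_R) is optimal for min-sum: c(T_L) + c(T_R) = OPT_sum. -/

import Mathlib

open scoped Classical

noncomputable def cost {α : Type*} [Fintype α] (w : α → α → ℝ) (G : SimpleGraph α) : ℝ :=
  (∑ u : α, ∑ v : α, if G.Adj u v then w u v else 0) / 2

/-- `G` is a minimum spanning tree for the weight function `w`. -/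
def IsMST {α : Type*} [Fintype α] (w : α → α → ℝ) (G : SimpleGraph α) : Prop :=
  G.IsTree ∧ ∀ G' : SimpleGraph α, G'.IsTree → cost w G ≤ cost w G'

/-- Cost of a graph on the subtype of a subset `S`, w.r.t. the restricted weights. -/
noncomputable def subCost {V : Type*} [Fintype V] (w : V → V → ℝ) (S : Set V)
    (G : SimpleGraph S) : ℝ :=
  cost (fun u v : S => w u.1 v.1) G

/-- `G` is a minimum spanning tree of the subset `S` w.r.t. the restricted weights. -/
def IsSubMST {V : Type*} [Fintype V] (w : V → V → ℝ) (S : Set V) (G : SimpleGraph S) : Prop :=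
  IsMST (fun u v : S => w u.1 v.1) G

/-- Optimal min-sum cost of a feasible 2-MST solution: the blue class is a set `B`
containing exactly one vertex of each pair `{p i, q i}`, and the solution consists of
spanning trees of `B` and of its complement (the red class). -/
noncomputable def OPTsum {V : Type*} [Fintype V] {n : ℕ} (w : V → V → ℝ)
    (p q : Fin n → V) : ℝ :=
  sInf {c : ℝ | ∃ B : Set V, (∀ i, (p i ∈ B ↔ q i ∉ B)) ∧
    ∃ (Sb : SimpleGraph B) (Sr : SimpleGraph (Bᶜ : Set V)),
      Sb.IsTree ∧ Sr.IsTree ∧ c = subCost w B Sb + subCost w Bᶜ Sr}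

/-- Optimal min-max cost of a feasible 2-MST solution. -/
noncomputable def OPTmm {V : Type*} [Fintype V] {n : ℕ} (w : V → V → ℝ)
    (p q : Fin n → V) : ℝ :=
  sInf {c : ℝ | ∃ B : Set V, (∀ i, (p i ∈ B ↔ q i ∉ B)) ∧
    ∃ (Sb : SimpleGraph B) (Sr : SimpleGraph (Bᶜ : Set V)),
      Sb.IsTree ∧ Sr.IsTree ∧ c = max (subCost w B Sb) (subCost w Bᶜ Sr)}

/-!
Deleting the heaviest edge `e_× = vL vR` from the tree `T` leaves two trees `T_L`, `T_R` whose
vertex sets partition `V`, and `c(T) = c(T_L) + c(T_R) + w_×`. Conversely, trees on a set `B` and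
on its complement, joined by any edge `u v` with `u ∈ B`, `v ∉ B`, form a spanning tree of `V`
(it is connected and has `|V| - 1` edges). Since `T` is connected it has such an edge `u v`, and
minimality of `T` gives `c(S_b) + c(S_r) + w(u, v) ≥ c(T)`, hence
`c(S_b) + c(S_r) ≥ c(T_L) + c(T_R)` because `w(u, v) ≤ w_×`. As no pair lies on one side, `V_L`
is a feasible blue class, so `c(T_L) + c(T_R)` is the least min-sum cost; with `B = V_L` and one
of the two trees kept, the same inequality shows that `T_L` and `T_R` are minimum spanning trees.
-/

open SimpleGraph

section Cost

variable {α β : Type*} [Fintype α] [Fintype β]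

lemma cost_comap_equiv (e : α ≃ β) (w : β → β → ℝ) (G : SimpleGraph β) :
    cost (fun x y => w (e x) (e y)) (G.comap e) = cost w G := by
  unfold cost
  rw [← e.sum_comp]
  congr 1
  refine Finset.sum_congr rfl fun x _ => ?_
  rw [← e.sum_comp]
  rfl

lemma cost_sum (w : α ⊕ β → α ⊕ β → ℝ) (G : SimpleGraph α) (H : SimpleGraph β) :
    cost w (G ⊕g H) =
      cost (fun x y => w (.inl x) (.inl y)) G + cost (fun x y => w (.inr x) (.inr y)) H := by
  simp [cost, Fintype.sum_sum_type, add_div]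

lemma cost_sup_of_disjoint (w : α → α → ℝ) {G H : SimpleGraph α} (h : Disjoint G H) :
    cost w (G ⊔ H) = cost w G + cost w H := by
  simp only [cost, ← add_div, ← Finset.sum_add_distrib]
  congr 1
  refine Finset.sum_congr rfl fun u _ => Finset.sum_congr rfl fun v _ => ?_
  have hGH : ¬(G.Adj u v ∧ H.Adj u v) := fun huv => h.le_bot (show (G ⊓ H).Adj u v from huv)
  by_cases hG : G.Adj u v <;> by_cases hH : H.Adj u v <;> simp_all

lemma cost_edge {w : α → α → ℝ} (hw : ∀ x y, w x y = w y x) {a b : α} (hab : a ≠ b) :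
    cost w (edge a b) = w a b := by
  simp only [cost, edge_adj]
  rw [Fintype.sum_eq_add a b hab, Fintype.sum_eq_single b, Fintype.sum_eq_single a]
  · simp [hab, hab.symm, hw b a]
  all_goals intro x hx; aesop

lemma cost_sup_edge {w : α → α → ℝ} (hw : ∀ x y, w x y = w y x) {G : SimpleGraph α} {a b : α}
    (hab : a ≠ b) (hG : ¬G.Adj a b) : cost w (G ⊔ edge a b) = cost w G + w a b := by
  rw [cost_sup_of_disjoint w ((disjoint_edge G).2 hG), cost_edge hw hab]

end Cost

namespace SimpleGraph

variable {α β : Type*}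

lemma IsTree.sum_sup_edge [Finite α] [Finite β] {G : SimpleGraph α} {H : SimpleGraph β}
    (hG : G.IsTree) (hH : H.IsTree) (a : α) (b : β) :
    ((G ⊕g H) ⊔ edge (Sum.inl a) (Sum.inr b)).IsTree := by
  rw [isTree_iff_connected_and_card] at hG hH ⊢
  refine ⟨hG.1.sum_sup_edge hH.1, ?_⟩
  have hcard : Nat.card ((G ⊕g H) ⊔ edge (Sum.inl a) (Sum.inr b)).edgeSet =
      Nat.card (G ⊕g H).edgeSet + 1 := by
    rw [edgeSet_sup, edgeSet_edge_of_ne Sum.inl_ne_inr, Set.union_singleton, Nat.card_coe_set_eq,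
      Set.ncard_insert_of_notMem, Nat.card_coe_set_eq]
    exact not_adj_sum_inl_inr (G := G) (H := H) a b
  rw [hcard, Nat.card_congr edgeSetSumEquiv, Nat.card_sum, Nat.card_sum]
  omega

lemma IsAcyclic.isTree_induce_setOf_reachable {G : SimpleGraph α} (hG : G.IsAcyclic) (a : α) :
    (G.induce {x | G.Reachable a x}).IsTree := by
  have hsupp : (G.connectedComponentMk a).supp = {x | G.Reachable a x} := by
    ext x
    simp [ConnectedComponent.mem_supp_iff, ConnectedComponent.eq, reachable_comm]
  rw [← hsupp]
  exact hG.isTree_connectedComponent _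

variable {T : SimpleGraph α} {a b : α}

lemma Reachable.deleteEdges_left_or_right {x : α} (h : T.Reachable a x) :
    (T.deleteEdges {s(a, b)}).Reachable a x ∨ (T.deleteEdges {s(a, b)}).Reachable b x := by
  set D := T.deleteEdges {s(a, b)}
  suffices ∀ {y} (W : T.Walk y x), D.Reachable a y ∨ D.Reachable b y →
      D.Reachable a x ∨ D.Reachable b x from this h.some (Or.inl .rfl)
  intro y W
  clear h
  induction W with
  | nil => exact id
  | @cons y z x hyz _ ih =>
    refine fun hy => ih ?_
    by_cases he : s(y, z) = s(a, b)
    · rcases Sym2.eq_iff.1 he with ⟨-, rfl⟩ | ⟨-, rfl⟩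
      exacts [Or.inr .rfl, Or.inl .rfl]
    · have hD : D.Adj y z := by simp [D, hyz, he]
      exact hy.imp (·.trans hD.reachable) (·.trans hD.reachable)

lemma comap_sumCompl_eq_sum_sup_edge (hab : T.Adj a b) {S : Set α}
    (hS : ∀ u v, (T.deleteEdges {s(a, b)}).Adj u v → u ∈ S → v ∈ S) (ha : a ∈ S) (hb : b ∉ S) :
    T.comap (Equiv.Set.sumCompl S) =
      ((T.deleteEdges {s(a, b)}).induce S ⊕g (T.deleteEdges {s(a, b)}).induce Sᶜ) ⊔
        edge (Sum.inl ⟨a, ha⟩) (Sum.inr ⟨b, hb⟩) := by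
  have hcross : ∀ x y, T.Adj x y → x ∈ S → y ∉ S → x = a ∧ y = b := by
    intro x y hxy hx hy
    by_contra hne
    refine hy (hS x y ?_ hx)
    simp only [deleteEdges_adj, Set.mem_singleton_iff, Sym2.eq_iff]
    exact ⟨hxy, by rintro (h | ⟨rfl, -⟩); exacts [hne h, hb hx]⟩
  ext (⟨x, hx⟩ | ⟨x, hx⟩) (⟨y, hy⟩ | ⟨y, hy⟩) <;>
    simp only [comap_adj, Equiv.Set.sumCompl_apply_inl, Equiv.Set.sumCompl_apply_inr, sup_adj,
      sum_adj, edge_adj, Function.Embedding.subtype_apply, deleteEdges_adj, Set.mem_singleton_iff,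
      Sym2.eq, Sym2.rel_iff', Prod.mk.injEq, Prod.swap_prod_mk, not_or, not_and, Sum.inl.injEq,
      Sum.inr.injEq, Subtype.mk.injEq, reduceCtorEq, and_false, false_and, and_self, and_true,
      or_self, or_false, false_or, ne_eq, not_false_eq_true, iff_self_and]
  · exact fun _ => ⟨fun _ h => hb (h ▸ hy), fun h => absurd (h ▸ hx) hb⟩
  · exact ⟨fun h => hcross x y h hx hy, by rintro ⟨rfl, rfl⟩; exact hab⟩
  · exact ⟨fun h => (hcross y x h.symm hy hx).symm, by rintro ⟨rfl, rfl⟩; exact hab.symm⟩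
  · exact fun _ => ⟨fun h => absurd (h ▸ ha) hx, fun _ h => hy (h ▸ ha)⟩

lemma IsTree.setOf_reachable_deleteEdges_right (hT : T.IsTree) (hab : T.Adj a b) :
    {x | (T.deleteEdges {s(a, b)}).Reachable b x} =
      {x | (T.deleteEdges {s(a, b)}).Reachable a x}ᶜ := by
  have hsep : ¬(T.deleteEdges {s(a, b)}).Reachable a b :=
    isBridge_iff.1 (isAcyclic_iff_forall_adj_isBridge.1 hT.isAcyclic hab)
  ext x
  exact ⟨fun hb ha => hsep (ha.trans hb.symm),
    ((hT.connected.preconnected a x).deleteEdges_left_or_right).resolve_left⟩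

end SimpleGraph

section MinimumSpanningTree

variable {V : Type*} [Fintype V] {w : V → V → ℝ} {T : SimpleGraph V}

lemma IsMST.cost_le_of_equiv {α : Type*} [Fintype α] (hT : IsMST w T) (e : α ≃ V)
    {K : SimpleGraph α} (hK : K.IsTree) : cost w T ≤ cost (fun x y => w (e x) (e y)) K := by
  calc cost w T ≤ cost w (K.map e.toEmbedding) := hT.2 _ ((Iso.map e K).isTree_iff.1 hK)
    _ = cost (fun x y => w (e x) (e y)) K := by
      rw [← cost_comap_equiv e, ← Equiv.coe_toEmbedding, comap_map_eq]

lemma cost_sumCompl_sup_edge (hw : ∀ x y, w x y = w y x) {S : Set V} (GA : SimpleGraph S)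
    (GB : SimpleGraph ↑Sᶜ) (a : S) (b : ↑Sᶜ) :
    cost (fun x y => w (Equiv.Set.sumCompl S x) (Equiv.Set.sumCompl S y))
        ((GA ⊕g GB) ⊔ edge (Sum.inl a) (Sum.inr b)) =
      subCost w S GA + subCost w Sᶜ GB + w a b := by
  rw [cost_sup_edge (fun x y => hw _ _) Sum.inl_ne_inr (not_adj_sum_inl_inr a b), cost_sum]
  simp only [Equiv.Set.sumCompl_apply_inl, Equiv.Set.sumCompl_apply_inr, subCost]
  -- the two sides use different (equal) `Fintype` instances on `↑Sᶜ`
  congr!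

lemma IsMST.cost_le_subCost_add_subCost_add (hT : IsMST w T) (hw : ∀ x y, w x y = w y x) {S : Set V}
    {GA : SimpleGraph S} {GB : SimpleGraph ↑Sᶜ} (hA : GA.IsTree) (hB : GB.IsTree)
    (a : S) (b : ↑Sᶜ) : cost w T ≤ subCost w S GA + subCost w Sᶜ GB + w a b := by
  rw [← cost_sumCompl_sup_edge hw]
  exact hT.cost_le_of_equiv _ (hA.sum_sup_edge hB a b)

lemma IsMST.le_subCost_add_subCost (hT : IsMST w T) (hw : ∀ x y, w x y = w y x) {cA cB W : ℝ}
    (hmax : ∀ a b, T.Adj a b → w a b ≤ W) (hcost : cost w T = cA + cB + W) {B : Set V}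
    {Sb : SimpleGraph B} {Sr : SimpleGraph ↑Bᶜ} (hSb : Sb.IsTree) (hSr : Sr.IsTree) :
    cA + cB ≤ subCost w B Sb + subCost w Bᶜ Sr := by
  obtain ⟨x⟩ := hSb.connected.nonempty
  obtain ⟨y⟩ := hSr.connected.nonempty
  obtain ⟨d, -, hd₁, hd₂⟩ :=
    (hT.1.connected.preconnected x y).some.exists_boundary_dart B x.2 y.2
  have hjoin := hT.cost_le_subCost_add_subCost_add hw hSb hSr ⟨_, hd₁⟩ ⟨_, hd₂⟩
  have hd := hmax _ _ d.adj
  linarith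

lemma IsMST.isSubMST_of_cost_eq (hT : IsMST w T) (hw : ∀ x y, w x y = w y x) {S : Set V}
    {GA : SimpleGraph S} {GB : SimpleGraph ↑Sᶜ} (hA : GA.IsTree) (hB : GB.IsTree)
    (a : S) (b : ↑Sᶜ) (hcost : cost w T = subCost w S GA + subCost w Sᶜ GB + w a b) :
    IsSubMST w S GA ∧ IsSubMST w Sᶜ GB := by
  refine ⟨⟨hA, fun G hG => ?_⟩, ⟨hB, fun G hG => ?_⟩⟩
  · have hjoin := hT.cost_le_subCost_add_subCost_add hw hG hB a b
    change subCost w S GA ≤ subCost w S G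
    linarith
  · have hjoin := hT.cost_le_subCost_add_subCost_add hw hA hG a b
    change subCost w Sᶜ GB ≤ subCost w Sᶜ G
    linarith

end MinimumSpanningTree

theorem stmt_9_general {V : Type*} [Fintype V]
    {n : ℕ}
    (p q : Fin n → V)
    (w : V → V → ℝ)
    (hw_symm : ∀ u v, w u v = w v u)
    (T : SimpleGraph V) (hT : IsMST w T)
    (vL vR : V) (hadj : T.Adj vL vR)
    (hmax : ∀ a b, T.Adj a b → w a b ≤ w vL vR)
    (VL VR : Set V)
    (hVL : VL = {x | (T.deleteEdges {s(vL, vR)}).Reachable vL x})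
    (hVR : VR = {x | (T.deleteEdges {s(vL, vR)}).Reachable vR x})
    (hnoL : ¬ ∃ i, p i ∈ VL ∧ q i ∈ VL) (hnoR : ¬ ∃ i, p i ∈ VR ∧ q i ∈ VR) :
    (∀ i, (p i ∈ VL ↔ q i ∉ VL)) ∧
    VR = VLᶜ ∧
    IsSubMST w VL ((T.deleteEdges {s(vL, vR)}).induce VL) ∧
    IsSubMST w VR ((T.deleteEdges {s(vL, vR)}).induce VR) ∧
    subCost w VL ((T.deleteEdges {s(vL, vR)}).induce VL) + subCost w VR ((T.deleteEdges {s(vL, vR)}).induce VR) =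
      OPTsum w p q := by
  set D := T.deleteEdges {s(vL, vR)}
  have hacyc : D.IsAcyclic := hT.1.isAcyclic.anti (deleteEdges_le _)
  have hTL : (D.induce VL).IsTree := hVL ▸ hacyc.isTree_induce_setOf_reachable vL
  have hTR : (D.induce VR).IsTree := hVR ▸ hacyc.isTree_induce_setOf_reachable vR
  have hVRc : VR = VLᶜ := by rw [hVL, hVR, hT.1.setOf_reachable_deleteEdges_right hadj]
  have hvL : vL ∈ VL := by rw [hVL]; exact .rfl
  have hvR : vR ∈ VR := by rw [hVR]; exact .rfl
  subst hVRc
  have hclosed : ∀ u v, D.Adj u v → u ∈ VL → v ∈ VL := by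
    rw [hVL]
    exact fun u v huv hu => hu.trans huv.reachable
  have hcost : cost w T = subCost w VL (D.induce VL) + subCost w VLᶜ (D.induce VLᶜ) + w vL vR := by
    rw [← cost_comap_equiv (Equiv.Set.sumCompl VL) w T, comap_sumCompl_eq_sum_sup_edge hadj hclosed hvL hvR,
      cost_sumCompl_sup_edge hw_symm]
  have hpair : ∀ i, (p i ∈ VL ↔ q i ∉ VL) := fun i =>
    ⟨fun hp hq => hnoL ⟨i, hp, hq⟩, fun hq => not_not.1 fun hp => hnoR ⟨i, hp, hq⟩⟩
  obtain ⟨hMSTL, hMSTR⟩ := hT.isSubMST_of_cost_eq hw_symm hTL hTR ⟨vL, hvL⟩ ⟨vR, hvR⟩ hcost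
  refine ⟨hpair, rfl, hMSTL, hMSTR, ?_⟩
  rw [OPTsum]
  refine Eq.symm <| IsLeast.csInf_eq ⟨⟨VL, hpair, _, _, hTL, hTR, rfl⟩, ?_⟩
  rintro c ⟨B, -, Sb, Sr, hSb, hSr, rfl⟩
  exact hT.le_subCost_add_subCost hw_symm hmax hcost hSb hSr

theorem stmt_9 {V : Type*} [Fintype V]
    {n : ℕ} (hn : 2 ≤ n)
    (p q : Fin n → V) (hpq : Function.Bijective (Sum.elim p q))
    (w : V → V → ℝ)
    (hw_self : ∀ v, w v v = 0)
    (hw_symm : ∀ u v, w u v = w v u)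
    (hw_nonneg : ∀ u v, 0 ≤ w u v)
    (hw_tri : ∀ u v x, w u v ≤ w u x + w x v)
    (T : SimpleGraph V) (hT : IsMST w T)
    (vL vR : V) (hadj : T.Adj vL vR)
    (hmax : ∀ a b, T.Adj a b → w a b ≤ w vL vR)
    (VL VR : Set V)
    (hVL : VL = {x | (T.deleteEdges {s(vL, vR)}).Reachable vL x})
    (hVR : VR = {x | (T.deleteEdges {s(vL, vR)}).Reachable vR x})
    (hnoL : ¬ ∃ i, p i ∈ VL ∧ q i ∈ VL) (hnoR : ¬ ∃ i, p i ∈ VR ∧ q i ∈ VR) :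
    (∀ i, (p i ∈ VL ↔ q i ∉ VL)) ∧
    VR = VLᶜ ∧
    IsSubMST w VL ((T.deleteEdges {s(vL, vR)}).induce VL) ∧
    IsSubMST w VR ((T.deleteEdges {s(vL, vR)}).induce VR) ∧
    subCost w VL ((T.deleteEdges {s(vL, vR)}).induce VL) + subCost w VR ((T.deleteEdges {s(vL, vR)}).induce VR) =
      OPTsum w p q :=
  stmt_9_general p q w hw_symm T hT vL vR hadj hmax VL VR hVL hVR hnoL hnoR
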